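/- arXiv:1002.3272 — 5 statements merged into one kernel-verified Lean document; each statement's English description precedes it below -/
import Mathlib

section
/- Let X_i be real separated locally convex spaces, f_i : X_i → ℝ̄ functions with cl f_i proper, i = 1,…,m, S ⊆ ∏_{i=1}^m X_i a linear subspace, and define g(x₁,…,x_m) = Σ_{i=1}^m f_i(x_i). If for each i one has f_i(x_i) = (cl f_i)(x_i) for all x_i ∈ dom(cl f_i) ∩ pr_{X_i}(S), where pr_{X_i}(S) is the projection of S onto the i-th coordinate, then g(x) = (cl g)(x) for all x ∈ dom(cl g) ∩ S. -/
/-!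
Since the projections are continuous and liminf is superadditive on `EReal`,
`∑ i, cl f_i (x_i) ≤ cl g (x)`. If `cl g (x)` is finite, properness of the `cl f_i` makes every
`cl f_i (x_i)` finite, so for `x ∈ S` the hypothesis turns the left side into `g x`; together with
`cl g ≤ g` this gives `g x = cl g (x)`.
-/

open Filter Topology Pointwise

noncomputable section

/-- A function into the extended reals is proper if it never takes the value `⊥`
and is not identically `⊤`. -/
def Proper {Y : Type*} (f : Y → EReal) : Prop := (∀ x, f x ≠ ⊥) ∧ ∃ x, f x ≠ ⊤

/-- Convexity for extended-real-valued functions. -/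
def EConvexOn {Y : Type*} [AddCommGroup Y] [Module ℝ Y] (f : Y → EReal) : Prop :=
  ∀ x y : Y, ∀ a b : ℝ, 0 < a → 0 < b → a + b = 1 →
    f (a • x + b • y) ≤ (a : EReal) * f x + (b : EReal) * f y

/-- The lower semicontinuous hull of `f` (the function whose epigraph is the closure of
the epigraph of `f`), described via the liminf. -/
def lscHull {Y : Type*} [TopologicalSpace Y] (f : Y → EReal) (x : Y) : EReal :=
  liminf f (𝓝 x)

/-- The `ε`-subdifferential of `f` at `x`, a subset of the topological dual endowed with
the weak* topology.  It is empty unless `f x` is finite. -/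
def epsSubdiff {Y : Type*} [AddCommGroup Y] [Module ℝ Y] [TopologicalSpace Y]
    (f : Y → EReal) (ε : ℝ) (x : Y) : Set (WeakDual ℝ Y) :=
  {p | ∃ r : ℝ, f x = (r : EReal) ∧ ∀ y : Y, ((r + p (y - x) - ε : ℝ) : EReal) ≤ f y}

/-- The Fenchel conjugate of `f`, defined on the dual with the weak* topology. -/
def conj {Y : Type*} [AddCommGroup Y] [Module ℝ Y] [TopologicalSpace Y]
    (f : Y → EReal) (p : WeakDual ℝ Y) : EReal :=
  ⨆ x : Y, (p x : EReal) - f x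

theorem lscHull_le_self {Y : Type*} [TopologicalSpace Y] (f : Y → EReal) (x : Y) :
    lscHull f x ≤ f x :=
  liminf_le_of_frequently_le'
    (((frequently_pure (p := fun y => f y ≤ f x)).2 le_rfl).filter_mono (pure_le_nhds x))

theorem ContinuousAt.lscHull_le_liminf_comp {Y Z : Type*} [TopologicalSpace Y]
    [TopologicalSpace Z] {π : Z → Y} {z : Z} (hπ : ContinuousAt π z) (f : Y → EReal) :
    lscHull f (π z) ≤ liminf (f ∘ π) (𝓝 z) :=
  hπ.tendsto.liminf_le_liminf_comp

theorem EReal.sum_liminf_le_liminf_sum {α ι : Type*} (F : Filter α) (s : Finset ι)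
    (u : ι → α → EReal) : ∑ i ∈ s, liminf (u i) F ≤ liminf (∑ i ∈ s, u i) F :=
  Finset.le_sum_of_subadditive (N := ERealᵒᵈ) (fun v => OrderDual.toDual (liminf v F))
    (le_liminf_of_le (u := (0 : α → EReal)) (f := F) (by isBoundedDefault)
      (Eventually.of_forall fun _ => le_rfl)) (fun _ _ => EReal.le_liminf_add) s u

theorem EReal.ne_top_of_sum_ne_top {ι : Type*} {s : Finset ι} {u : ι → EReal}
    (hbot : ∀ i ∈ s, u i ≠ ⊥) (htop : ∑ i ∈ s, u i ≠ ⊤) {i : ι} (hi : i ∈ s) : u i ≠ ⊤ := by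
  classical
  have hrest : ∑ j ∈ s.erase i, u j ≠ ⊥ :=
    Finset.sum_induction _ (· ≠ ⊥) (fun _ _ ha hb => EReal.add_ne_bot_iff.2 ⟨ha, hb⟩)
      EReal.zero_ne_bot fun j hj => hbot j (Finset.mem_of_mem_erase hj)
  intro hi_top
  rw [← Finset.add_sum_erase s u hi, hi_top, EReal.top_add_of_ne_bot hrest] at htop
  exact htop rfl

theorem sum_lscHull_le_lscHull_sum {ι : Type*} [Fintype ι] {X : ι → Type*}
    [∀ i, TopologicalSpace (X i)] (f : ∀ i, X i → EReal) (x : ∀ i, X i) :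
    ∑ i, lscHull (f i) (x i) ≤ lscHull (fun z => ∑ i, f i (z i)) x :=
  calc ∑ i, lscHull (f i) (x i)
      ≤ ∑ i, liminf (fun z : ∀ j, X j => f i (z i)) (𝓝 x) :=
        Finset.sum_le_sum fun i _ => (continuous_apply i).continuousAt.lscHull_le_liminf_comp (f i)
    _ ≤ liminf (∑ i, fun z : ∀ j, X j => f i (z i)) (𝓝 x) :=
        EReal.sum_liminf_le_liminf_sum _ _ _
    _ = lscHull (fun z => ∑ i, f i (z i)) x := by
        simp only [lscHull, Finset.sum_fn]

variable {m : ℕ} {X : Fin m → Type*} [∀ i, AddCommGroup (X i)] [∀ i, Module ℝ (X i)]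
  [∀ i, TopologicalSpace (X i)] [∀ i, IsTopologicalAddGroup (X i)]
  [∀ i, ContinuousSMul ℝ (X i)] [∀ i, LocallyConvexSpace ℝ (X i)] [∀ i, T2Space (X i)]

/-- If, for each `i`, `f i` coincides with its lower semicontinuous hull on
`dom (cl f_i) ∩ pr_{X_i}(S)`, then the separable function `g(x₁,…,x_m) = ∑ i, f i (x i)`
coincides with its lower semicontinuous hull on `dom (cl g) ∩ S`. -/
theorem separable_sum_eq_lscHull_on_subspace
    (f : ∀ i, X i → EReal) (hclfp : ∀ i, Proper (lscHull (f i)))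
    (S : Submodule ℝ (∀ i, X i))
    (h : ∀ i, ∀ xi : X i, lscHull (f i) xi ≠ ⊤ →
      xi ∈ (fun x : ∀ j, X j => x i) '' (S : Set (∀ j, X j)) →
      f i xi = lscHull (f i) xi) :
    ∀ x ∈ S, lscHull (fun z : ∀ i, X i => ∑ i, f i (z i)) x ≠ ⊤ →
      (∑ i, f i (x i)) = lscHull (fun z : ∀ i, X i => ∑ i, f i (z i)) x := by
  intro x hx hxt
  have hsum_le := sum_lscHull_le_lscHull_sum f x
  have hfinite : ∀ i, lscHull (f i) (x i) ≠ ⊤ := fun i =>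
    EReal.ne_top_of_sum_ne_top (fun j _ => (hclfp j).1 (x j))
      (ne_top_of_le_ne_top hxt hsum_le) (Finset.mem_univ i)
  refine le_antisymm ?_ (lscHull_le_self _ x)
  calc ∑ i, f i (x i) = ∑ i, lscHull (f i) (x i) :=
        Finset.sum_congr rfl fun i _ => h i (x i) (hfinite i) ⟨x, hx, rfl⟩
    _ ≤ lscHull (fun z : ∀ i, X i => ∑ i, f i (z i)) x := hsum_le
end
end

section
/- Let X be a real separated locally convex space and f, g : X → ℝ̄ convex functions such that cl f and cl g are proper, dom(cl f) ∩ dom(cl g) ≠ ∅, and cl(f+g) = cl f + cl g. Then (f+g)* = cl(f* □ g*), where the closure is taken in the weak* topology of X*. -/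
/-! Fenchel–Moreau in a locally convex space `Y`: a function `h` with convex strict epigraph whose
lower semicontinuous hull is nowhere `⊥` satisfies `cl h = h**`. Hahn–Banach in `Y × ℝ` separates a
point below the closed epigraph; a vertical separating hyperplane is tilted with a non-vertical
affine minorant, which exists because `cl h > ⊥`.

For `k = f* □ g*` one computes `k* = f** + g**` on the points of `X`, which are all the
weak*-continuous functionals on `X*`. Thus `k* = cl f + cl g = cl (f + g)` by Fenchel–Moreau in `X`,
and `(f + g)* = (cl (f + g))* = k** = cl k` by Fenchel–Moreau in `X*`: the strict epigraph of `k`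
is the sum of those of `f*` and `g*`, hence convex, and `cl k > ⊥` since `k*` is finite at a
common point of `dom (cl f)` and `dom (cl g)`. -/

open Filter Topology Pointwise

noncomputable section

namespace EReal

lemma coe_lt_coe_sub_iff {z a : ℝ} {b : EReal} :
    (z : EReal) < a - b ↔ b < ((a - z : ℝ) : EReal) := by
  rw [EReal.lt_sub_iff_add_lt (.inr (coe_ne_top z)) (.inr (coe_ne_bot z)), coe_sub,
    EReal.lt_sub_iff_add_lt (.inl (coe_ne_bot z)) (.inl (coe_ne_top z)), add_comm]

lemma coe_sub_ne_bot {a : ℝ} {b : EReal} (hb : b ≠ ⊤) : (a : EReal) - b ≠ ⊥ := by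
  induction b <;> simp_all [← coe_sub]

lemma coe_sub_iInf {ι : Sort*} (a : ℝ) (S : ι → EReal) :
    (a : EReal) - ⨅ i, S i = ⨆ i, (a : EReal) - S i := by
  refine le_antisymm (ge_of_forall_gt_iff_ge.1 fun z hz => ?_)
    (iSup_le fun i => sub_le_sub le_rfl (iInf_le S i))
  obtain ⟨i, hi⟩ := iInf_lt_iff.1 (coe_lt_coe_sub_iff.1 hz)
  exact le_iSup_of_le i (coe_lt_coe_sub_iff.2 hi).le

lemma iSup_add_iSup {ι κ : Sort*} (A : ι → EReal) (B : κ → EReal) :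
    (⨆ i, A i) + ⨆ j, B j = ⨆ i, ⨆ j, A i + B j := by
  refine le_antisymm (add_le_of_forall_lt fun a ha b hb => ?_)
    (iSup₂_le fun i j => add_le_add (le_iSup A i) (le_iSup B j))
  obtain ⟨i, hi⟩ := lt_iSup_iff.1 ha
  obtain ⟨j, hj⟩ := lt_iSup_iff.1 hb
  exact (add_le_add hi.le hj.le).trans (le_iSup₂ (f := fun i j => A i + B j) i j)

lemma coe_add_sub_add (u v : ℝ) {A B : EReal} (hA : A ≠ ⊥) (hB : B ≠ ⊥) :
    ((u + v : ℝ) : EReal) - (A + B) = ((u : EReal) - A) + ((v : EReal) - B) := by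
  induction A <;> induction B <;> simp_all [← coe_add, ← coe_sub]
  ring

end EReal

open EReal

section lscHull

variable {Y : Type*} [TopologicalSpace Y]

lemma lscHull_le (h : Y → EReal) (x : Y) : lscHull h x ≤ h x :=
  liminf_le_of_frequently_le'
    ((frequently_pure (p := fun z => h z ≤ h x)).2 le_rfl |>.filter_mono (pure_le_nhds x))

lemma coe_le_lscHull_of_le {m : Y → ℝ} (hm : Continuous m) {h : Y → EReal}
    (hle : ∀ z, (m z : EReal) ≤ h z) (y : Y) : (m y : EReal) ≤ lscHull h y := by
  have hlim : Tendsto (fun z => (m z : EReal)) (𝓝 y) (𝓝 (m y)) :=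
    (continuous_coe_real_ereal.comp hm).tendsto y
  rw [lscHull, ← hlim.liminf_eq]
  exact liminf_le_liminf (Eventually.of_forall hle)

def strictEpigraph (h : Y → EReal) : Set (Y × ℝ) := {p | h p.1 < p.2}

lemma mem_closure_strictEpigraph {h : Y → EReal} {z : Y} {r : ℝ} (hz : h z ≤ r) :
    (z, r) ∈ closure (strictEpigraph h) := by
  have hsub : {z} ×ˢ Set.Ioi r ⊆ strictEpigraph h := by
    rintro ⟨w, s⟩ ⟨rfl, hs⟩
    exact hz.trans_lt (EReal.coe_lt_coe_iff.2 hs)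
  refine closure_mono hsub ?_
  rw [closure_prod_eq, closure_Ioi]
  exact ⟨subset_closure rfl, Set.self_mem_Ici⟩

lemma lscHull_le_of_mem_closure_strictEpigraph {h : Y → EReal} {y : Y} {t : ℝ}
    (hyt : (y, t) ∈ closure (strictEpigraph h)) : lscHull h y ≤ t := by
  refine le_of_forall_lt_iff_le.1 fun z hz => liminf_le_of_frequently_le' ?_
  rw [frequently_iff]
  intro U hU
  obtain ⟨⟨w, s⟩, ⟨hwU, -, hsz⟩, hws⟩ := mem_closure_iff_nhds.1 hyt _
    (prod_mem_nhds hU (Ioo_mem_nhds (sub_one_lt t) (EReal.coe_lt_coe_iff.1 hz)))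
  exact ⟨w, hwU, (lt_trans hws (EReal.coe_lt_coe_iff.2 hsz)).le⟩

end lscHull

section Convexity

variable {Y : Type*} [AddCommGroup Y]

def infConv (F G : Y → EReal) (q : Y) : EReal := ⨅ r, F (q - r) + G r

lemma strictEpigraph_infConv {F G : Y → EReal} (hF : ∀ y, F y ≠ ⊥) (hG : ∀ y, G y ≠ ⊥) :
    strictEpigraph (infConv F G) = strictEpigraph F + strictEpigraph G := by
  ext ⟨q, t⟩
  refine ⟨fun hq => ?_, ?_⟩
  · obtain ⟨r, hr⟩ := iInf_lt_iff.1 (show infConv F G q < t from hq)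
    rw [← EReal.lt_sub_iff_add_lt (.inl (hG r)) (.inr (hF _))] at hr
    obtain ⟨a, hFa, hat⟩ := lt_iff_exists_real_btwn.1 hr
    exact ⟨(q - r, a), hFa, (r, t - a), coe_lt_coe_sub_iff.1 hat, by simp⟩
  · rintro ⟨⟨q₁, t₁⟩, h₁, ⟨q₂, t₂⟩, h₂, he⟩
    simp only [Prod.mk_add_mk, Prod.mk.injEq] at he
    obtain ⟨rfl, rfl⟩ := he
    calc infConv F G (q₁ + q₂) ≤ F (q₁ + q₂ - q₂) + G q₂ := iInf_le _ q₂
      _ < t₁ + t₂ := by rw [_root_.add_sub_cancel_right]; exact EReal.add_lt_add h₁ h₂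

variable [Module ℝ Y]

lemma EConvexOn.convex_strictEpigraph {h : Y → EReal} (hh : EConvexOn h) :
    Convex ℝ (strictEpigraph h) := by
  refine convex_iff_forall_pos.2 ?_
  rintro ⟨x₁, t₁⟩ h₁ ⟨x₂, t₂⟩ h₂ a b ha hb hab
  obtain ⟨s₁, hs₁, hst₁⟩ := lt_iff_exists_real_btwn.1 h₁
  obtain ⟨s₂, hs₂, hst₂⟩ := lt_iff_exists_real_btwn.1 h₂
  calc h (a • x₁ + b • x₂) ≤ a * h x₁ + b * h x₂ := hh x₁ x₂ a b ha hb hab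
    _ ≤ a * s₁ + b * s₂ := add_le_add
        (mul_le_mul_of_nonneg_left hs₁.le (EReal.coe_nonneg.2 ha.le))
        (mul_le_mul_of_nonneg_left hs₂.le (EReal.coe_nonneg.2 hb.le))
    _ < ((a * t₁ + b * t₂ : ℝ) : EReal) := by
        have h₁ : s₁ < t₁ := EReal.coe_lt_coe_iff.1 hst₁
        have h₂ : s₂ < t₂ := EReal.coe_lt_coe_iff.1 hst₂
        norm_cast
        nlinarith

end Convexity

lemma lt_neg_inv_mul_add_div_iff {β u a r : ℝ} (hβ : 0 < β) :
    r < -β⁻¹ * a + u / β ↔ a + β * r < u := by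
  rw [show -β⁻¹ * a + u / β = (u - a) / β by field_simp; ring, lt_div_iff₀ hβ]
  constructor <;> intro <;> linarith

section Conjugate

variable {Y : Type*} [AddCommGroup Y] [Module ℝ Y] [TopologicalSpace Y]

lemma conj_le_coe_iff {h : Y → EReal} {φ : WeakDual ℝ Y} {c : ℝ} :
    conj h φ ≤ c ↔ ∀ z, ((φ z - c : ℝ) : EReal) ≤ h z := by
  refine iSup_le_iff.trans (forall_congr' fun z => ?_)
  rw [EReal.sub_le_iff_le_add (.inr (coe_ne_top c)) (.inr (coe_ne_bot c)), coe_sub,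
    EReal.sub_le_iff_le_add (.inl (coe_ne_bot c)) (.inl (coe_ne_top c)), add_comm]

lemma conj_ne_bot {h : Y → EReal} (hh : ∃ x, h x ≠ ⊤) (φ : WeakDual ℝ Y) : conj h φ ≠ ⊥ := by
  obtain ⟨x, hx⟩ := hh
  exact ne_bot_of_le_ne_bot (coe_sub_ne_bot hx) (le_iSup (fun x => (φ x : EReal) - h x) x)

lemma sub_conj_le_lscHull (h : Y → EReal) (φ : WeakDual ℝ Y) (y : Y) :
    (φ y : EReal) - conj h φ ≤ lscHull h y := by
  refine ge_of_forall_gt_iff_ge.1 fun t ht => ?_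
  have hmin := conj_le_coe_iff.1 (coe_lt_coe_sub_iff.1 ht).le
  simpa using coe_le_lscHull_of_le ((map_continuous φ).sub continuous_const) hmin y

lemma lscHull_ne_bot_of_conj_ne_top {h : Y → EReal} {φ : WeakDual ℝ Y} (hφ : conj h φ ≠ ⊤)
    (y : Y) : lscHull h y ≠ ⊥ :=
  ne_bot_of_le_ne_bot (coe_sub_ne_bot hφ) (sub_conj_le_lscHull h φ y)

lemma conj_lscHull (h : Y → EReal) : conj (lscHull h) = conj h := by
  funext φ
  refine le_antisymm (le_of_forall_lt_iff_le.1 fun c hc => conj_le_coe_iff.2 fun z => ?_)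
    (iSup_mono fun x => sub_le_sub le_rfl (lscHull_le h x))
  exact coe_le_lscHull_of_le ((map_continuous φ).sub continuous_const)
    (conj_le_coe_iff.1 hc.le) z

lemma econvexOn_conj (h : Y → EReal) : EConvexOn (conj h) := by
  intro φ₁ φ₂ a b ha hb hab
  refine iSup_le fun x => ?_
  calc (((a • φ₁ + b • φ₂) x : ℝ) : EReal) - h x
      ≤ a * ((φ₁ x : EReal) - h x) + b * ((φ₂ x : EReal) - h x) := by
        induction h x with
        | bot => simp [coe_mul_top_of_pos ha, coe_mul_top_of_pos hb]
        | coe c =>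
            norm_cast
            change a * φ₁ x + b * φ₂ x - c ≤ a * (φ₁ x - c) + b * (φ₂ x - c)
            exact le_of_eq (by linear_combination c * hab)
        | top => simp
    _ ≤ a * conj h φ₁ + b * conj h φ₂ := add_le_add
        (mul_le_mul_of_nonneg_left (le_iSup (fun x => (φ₁ x : EReal) - h x) x)
          (EReal.coe_nonneg.2 ha.le))
        (mul_le_mul_of_nonneg_left (le_iSup (fun x => (φ₂ x : EReal) - h x) x)
          (EReal.coe_nonneg.2 hb.le))

lemma conj_infConv {F G : Y → EReal} (hF : ∀ y, F y ≠ ⊥) (hG : ∀ y, G y ≠ ⊥)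
    (φ : WeakDual ℝ Y) : conj (infConv F G) φ = conj F φ + conj G φ := by
  have hsplit : ∀ s r, (((φ (s + r)) : ℝ) : EReal) - (F (s + r - r) + G r)
      = ((φ s : EReal) - F s) + ((φ r : EReal) - G r) := fun s r => by
    rw [_root_.add_sub_cancel_right, map_add, coe_add_sub_add _ _ (hF s) (hG r)]
  calc conj (infConv F G) φ
      = ⨆ q, ⨆ r, (φ q : EReal) - (F (q - r) + G r) := iSup_congr fun q => coe_sub_iInf _ _
    _ = ⨆ r, ⨆ s, ((φ s : EReal) - F s) + ((φ r : EReal) - G r) := by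
        rw [iSup_comm]
        refine iSup_congr fun r => ?_
        rw [← (Equiv.addRight r).iSup_comp]
        exact iSup_congr fun s => hsplit s r
    _ = conj F φ + conj G φ := by rw [iSup_comm, conj, conj, iSup_add_iSup]

lemma le_sub_conj_of_minorant {h : Y → EReal} {φ : WeakDual ℝ Y} {d : ℝ}
    (hφ : ∀ z, ((φ z + d : ℝ) : EReal) ≤ h z) (y : Y) :
    ((φ y + d : ℝ) : EReal) ≤ φ y - conj h φ := by
  have hconj : conj h φ ≤ ((-d : ℝ) : EReal) :=
    conj_le_coe_iff.2 fun z => by simpa only [sub_neg_eq_add] using hφ z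
  calc ((φ y + d : ℝ) : EReal) = φ y - ((-d : ℝ) : EReal) := by rw [← coe_sub, sub_neg_eq_add]
    _ ≤ φ y - conj h φ := sub_le_sub le_rfl hconj

lemma affine_le_of_separation {h : Y → EReal} {ψ : WeakDual ℝ Y} {β u : ℝ} (hβ : 0 < β)
    (key : ∀ z (r : ℝ), h z ≤ r → u < ψ z + β * r) (z : Y) :
    (((-β⁻¹ • ψ) z + u / β : ℝ) : EReal) ≤ h z := by
  refine le_of_not_gt fun hlt => ?_
  obtain ⟨r, hzr, hr⟩ := lt_iff_exists_real_btwn.1 hlt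
  exact (key z r hzr.le).not_gt ((lt_neg_inv_mul_add_div_iff hβ).1 (EReal.coe_lt_coe_iff.1 hr))

lemma exists_affine_minorant_gt_of_vertical {h : Y → EReal} {φ₁ ψ : WeakDual ℝ Y} {d₁ u : ℝ}
    (hφ₁ : ∀ z, ((φ₁ z + d₁ : ℝ) : EReal) ≤ h z) (key : ∀ z (r : ℝ), h z ≤ r → u < ψ z)
    {y : Y} (hy : ψ y < u) (t : ℝ) :
    ∃ (φ : WeakDual ℝ Y) (d : ℝ), (∀ z, ((φ z + d : ℝ) : EReal) ≤ h z) ∧ t < φ y + d := by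
  obtain ⟨n, hn⟩ := exists_nat_gt ((t - (φ₁ y + d₁)) / (u - ψ y))
  rw [div_lt_iff₀ (sub_pos.2 hy)] at hn
  refine ⟨φ₁ - (n : ℝ) • ψ, d₁ + n * u, fun z => ?_, ?_⟩
  · rcases eq_or_ne (h z) ⊤ with hz | hz
    · simp [hz]
    obtain ⟨r, hzr, -⟩ := lt_iff_exists_real_btwn.1 hz.lt_top
    have hψz := key z r hzr.le
    refine le_trans (EReal.coe_le_coe_iff.2 ?_) (hφ₁ z)
    change φ₁ z - n * ψ z + (d₁ + n * u) ≤ φ₁ z + d₁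
    nlinarith [n.cast_nonneg (α := ℝ)]
  · change t < φ₁ y - n * ψ y + (d₁ + n * u)
    linarith

end Conjugate

section FenchelMoreau

variable {Y : Type*} [AddCommGroup Y] [Module ℝ Y] [TopologicalSpace Y]
  [IsTopologicalAddGroup Y] [ContinuousSMul ℝ Y] [LocallyConvexSpace ℝ Y]

lemma exists_separation {h : Y → EReal} (hconv : Convex ℝ (strictEpigraph h))
    {z₀ : Y} {r₀ : ℝ} (hz₀ : h z₀ ≤ r₀) {w : Y} {s : ℝ} (hs : s < lscHull h w) :
    ∃ (ψ : WeakDual ℝ Y) (β u : ℝ), 0 ≤ β ∧ ψ w + β * s < u ∧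
      ∀ z (r : ℝ), h z ≤ r → u < ψ z + β * r := by
  have hws : (w, s) ∉ closure (strictEpigraph h) := fun hmem =>
    (lscHull_le_of_mem_closure_strictEpigraph hmem).not_gt hs
  obtain ⟨Φ, u, hΦws, hΦ⟩ :=
    geometric_hahn_banach_point_closed hconv.closure isClosed_closure hws
  have hΦ_apply : ∀ z r, Φ (z, r) = Φ (z, 0) + Φ (0, 1) * r := fun z r => by
    rw [mul_comm, ← smul_eq_mul, ← map_smul, ← map_add]
    simp
  have key : ∀ z (r : ℝ), h z ≤ r → u < Φ (z, 0) + Φ (0, 1) * r := fun z r hzr =>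
    hΦ_apply z r ▸ hΦ _ (mem_closure_strictEpigraph hzr)
  refine ⟨(Φ.comp (.inl ℝ Y ℝ) : Y →L[ℝ] ℝ), Φ (0, 1), u, ?_, hΦ_apply w s ▸ hΦws, key⟩
  -- `β ≥ 0` because the epigraph contains the upward ray above `(z₀, r₀)`.
  by_contra! hβ
  obtain ⟨n, hn⟩ := exists_nat_gt ((Φ (z₀, 0) + Φ (0, 1) * r₀ - u) / -Φ (0, 1))
  rw [div_lt_iff₀ (neg_pos.2 hβ)] at hn
  have := key z₀ (r₀ + n)
    (hz₀.trans (EReal.coe_le_coe_iff.2 (le_add_of_nonneg_right n.cast_nonneg)))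
  nlinarith

lemma exists_affine_minorant {h : Y → EReal} (hconv : Convex ℝ (strictEpigraph h))
    {z₀ : Y} {r₀ : ℝ} (hz₀ : h z₀ ≤ r₀) (hbot : lscHull h z₀ ≠ ⊥) :
    ∃ (φ : WeakDual ℝ Y) (d : ℝ), ∀ z, ((φ z + d : ℝ) : EReal) ≤ h z := by
  obtain ⟨s₀, -, hs₀⟩ := lt_iff_exists_real_btwn.1 (bot_lt_iff_ne_bot.2 hbot)
  obtain ⟨ψ, β, u, -, hs, key⟩ := exists_separation hconv hz₀ hs₀
  have hs₀r₀ : s₀ < r₀ := EReal.coe_lt_coe_iff.1 (hs₀.trans_le ((lscHull_le h z₀).trans hz₀))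
  -- `(z₀, r₀)` and `(z₀, s₀)` lie on opposite sides, so the hyperplane is not vertical.
  have hβ : 0 < β := by nlinarith [key z₀ r₀ hz₀]
  exact ⟨_, _, affine_le_of_separation hβ key⟩

lemma exists_affine_minorant_gt {h : Y → EReal} (hconv : Convex ℝ (strictEpigraph h))
    (hbot : ∀ x, lscHull h x ≠ ⊥) {y : Y} {t : ℝ} (ht : (t : EReal) < lscHull h y) :
    ∃ (φ : WeakDual ℝ Y) (d : ℝ), (∀ z, ((φ z + d : ℝ) : EReal) ≤ h z) ∧ t < φ y + d := by
  by_cases htop : ∀ z, h z = ⊤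
  · exact ⟨0, t + 1, fun z => by simp [htop z], by change t < 0 + (t + 1); linarith⟩
  obtain ⟨z₀, hz₀⟩ := not_forall.1 htop
  obtain ⟨r₀, hr₀, -⟩ := lt_iff_exists_real_btwn.1 (lt_top_iff_ne_top.2 hz₀)
  obtain ⟨ψ, β, u, hβ, hyt, key⟩ := exists_separation hconv hr₀.le ht
  rcases hβ.eq_or_lt with rfl | hβ
  · simp only [zero_mul, add_zero] at hyt key
    obtain ⟨φ₁, d₁, hφ₁⟩ := exists_affine_minorant hconv hr₀.le (hbot z₀)
    exact exists_affine_minorant_gt_of_vertical hφ₁ key hyt t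
  · exact ⟨-β⁻¹ • ψ, u / β, affine_le_of_separation hβ key, (lt_neg_inv_mul_add_div_iff hβ).2 hyt⟩

theorem lscHull_eq_iSup_sub_conj {h : Y → EReal} (hconv : Convex ℝ (strictEpigraph h))
    (hbot : ∀ x, lscHull h x ≠ ⊥) (y : Y) :
    lscHull h y = ⨆ φ : WeakDual ℝ Y, (φ y : EReal) - conj h φ := by
  refine le_antisymm (ge_of_forall_gt_iff_ge.1 fun t ht => ?_)
    (iSup_le fun φ => sub_conj_le_lscHull h φ y)
  obtain ⟨φ, d, hφ, htφ⟩ := exists_affine_minorant_gt hconv hbot ht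
  exact le_iSup_of_le φ ((EReal.coe_le_coe_iff.2 htφ.le).trans (le_sub_conj_of_minorant hφ y))

end FenchelMoreau

section WeakDual

variable {E : Type*} [AddCommGroup E] [Module ℝ E] [TopologicalSpace E]

instance WeakDual.instLocallyConvexSpace : LocallyConvexSpace ℝ (WeakDual ℝ E) :=
  WeakBilin.locallyConvexSpace

def WeakDual.evalAt (x : E) : WeakDual ℝ (WeakDual ℝ E) := WeakBilin.eval (topDualPairing ℝ E) x

lemma WeakDual.evalAt_surjective : Function.Surjective (WeakDual.evalAt (E := E)) :=
  LinearMap.dualEmbedding_surjective _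

end WeakDual

variable {X : Type*} [AddCommGroup X] [Module ℝ X] [TopologicalSpace X]
  [IsTopologicalAddGroup X] [ContinuousSMul ℝ X] [LocallyConvexSpace ℝ X] [T2Space X]

set_option linter.unusedSectionVars false in
/-- Moreau–Rockafellar-type formula: under the hypotheses, `(f+g)* = cl (f* □ g*)`,
the closure being the lower semicontinuous hull in the weak* topology of the dual. -/
theorem conj_sum_eq_lscHull_infConv_conj
    (f g : X → EReal) (hf : EConvexOn f) (hg : EConvexOn g)
    (hfp : Proper (lscHull f)) (hgp : Proper (lscHull g))
    (hdom : ∃ x : X, lscHull f x ≠ ⊤ ∧ lscHull g x ≠ ⊤)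
    (hcl : ∀ y : X, lscHull (fun z => f z + g z) y = lscHull f y + lscHull g y) :
    ∀ p : WeakDual ℝ X, conj (fun z => f z + g z) p =
      lscHull (fun q : WeakDual ℝ X => ⨅ r : WeakDual ℝ X, conj f (q - r) + conj g r) p := by
  intro p
  obtain ⟨x₁, hfx₁, hgx₁⟩ := hdom
  have hcf (q : WeakDual ℝ X) : conj f q ≠ ⊥ := conj_lscHull f ▸ conj_ne_bot ⟨x₁, hfx₁⟩ q
  have hcg (q : WeakDual ℝ X) : conj g q ≠ ⊥ := conj_lscHull g ▸ conj_ne_bot ⟨x₁, hgx₁⟩ q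
  set k := infConv (conj f) (conj g)
  have hk (x : X) : conj k (WeakDual.evalAt x) = lscHull f x + lscHull g x := by
    rw [conj_infConv hcf hcg, lscHull_eq_iSup_sub_conj hf.convex_strictEpigraph hfp.1,
      lscHull_eq_iSup_sub_conj hg.convex_strictEpigraph hgp.1]
    rfl
  have hkconv : Convex ℝ (strictEpigraph k) := by
    rw [strictEpigraph_infConv hcf hcg]
    exact (econvexOn_conj f).convex_strictEpigraph.add (econvexOn_conj g).convex_strictEpigraph
  have hkbot : ∀ q, lscHull k q ≠ ⊥ := lscHull_ne_bot_of_conj_ne_top (φ := WeakDual.evalAt x₁)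
    (by rw [hk x₁]; exact add_ne_top hfx₁ hgx₁)
  change conj (fun z => f z + g z) p = lscHull k p
  calc conj (fun z => f z + g z) p = conj (lscHull fun z => f z + g z) p := by
        rw [conj_lscHull]
    _ = ⨆ x : X, (p x : EReal) - conj k (WeakDual.evalAt x) := by
        simp only [funext hcl, hk]
        rfl
    _ = ⨆ Φ : WeakDual ℝ (WeakDual ℝ X), (Φ p : EReal) - conj k Φ :=
        WeakDual.evalAt_surjective.iSup_comp fun Φ => (Φ p : EReal) - conj k Φ
    _ = lscHull k p := (lscHull_eq_iSup_sub_conj hkconv hkbot p).symm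
end
end

section
/- Let C = ({0} × [3,∞)) ∪ int(ℝ²₊) ⊆ ℝ² and define f₁ : ℝ² → ℝ̄ by f₁(u,v) = v + δ_C(u,v). Then for every ε > 0 and every a ≥ 3, ∂_ε f₁(0,a) = (−∞,0] × [1 − ε/a, 1]. -/
open Filter Topology Pointwise

noncomputable section

open Classical in
/-- The indicator function of a set, with values in the extended reals. -/
def ind {Y : Type*} (A : Set Y) (x : Y) : EReal := if x ∈ A then 0 else ⊤

/-- The `ε`-subdifferential of `f : ℝ² → ℝ̄` at `x`, as a subset of `ℝ²` (the dual of
`ℝ²` being identified with `ℝ²` via the usual pairing).  It is empty unless `f x` is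
finite. -/
def epsSubdiff2 (f : ℝ × ℝ → EReal) (ε : ℝ) (x : ℝ × ℝ) : Set (ℝ × ℝ) :=
  {p | ∃ r : ℝ, f x = (r : EReal) ∧
    ∀ y : ℝ × ℝ, ((r + (p.1 * (y.1 - x.1) + p.2 * (y.2 - x.2)) - ε : ℝ) : EReal) ≤ f y}

/-- The `ε`-subdifferential of `f : ℝ → ℝ̄` at `x`, as a subset of `ℝ`. -/
def epsSubdiff1 (f : ℝ → EReal) (ε : ℝ) (x : ℝ) : Set ℝ :=
  {p | ∃ r : ℝ, f x = (r : EReal) ∧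
    ∀ y : ℝ, ((r + p * (y - x) - ε : ℝ) : EReal) ≤ f y}

/-- The set `C = ({0} × [3,∞)) ∪ int(ℝ²₊)`. -/
def C : Set (ℝ × ℝ) := (({0} : Set ℝ) ×ˢ Set.Ici (3 : ℝ)) ∪ {p : ℝ × ℝ | 0 < p.1 ∧ 0 < p.2}

/-- The function `f₁(u,v) = v + δ_C(u,v)`. -/
def f₁ : ℝ × ℝ → EReal := fun p => (p.2 : EReal) + ind C p

/-!
On `C` the function `f₁` is the linear function `v`, so `(p₁, p₂) ∈ ∂_ε f₁(0, a)` means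
`p₁ u + (p₂ - 1)(v - a) ≤ ε` on `C`. Along the rays `(t, a)` and `(0, a + t)`, `t → ∞`, this
forces `p₁ ≤ 0` and `p₂ ≤ 1`; along the diagonal `(t, t)`, `t → 0⁺`, it forces
`(1 - p₂) a ≤ ε`. Conversely these three inequalities suffice because `C` lies in the closed
positive quadrant.
-/

open Set

theorem mem_epsSubdiff2_add_ind_iff {g : ℝ × ℝ → ℝ} {A : Set (ℝ × ℝ)} {ε : ℝ}
    {x p : ℝ × ℝ} (hx : x ∈ A) :
    p ∈ epsSubdiff2 (fun y => (g y : EReal) + ind A y) ε x ↔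
      ∀ y ∈ A, g x + (p.1 * (y.1 - x.1) + p.2 * (y.2 - x.2)) - ε ≤ g y := by
  have hval : ∀ y ∈ A, (g y : EReal) + ind A y = g y := fun y hy => by simp [ind, hy]
  constructor
  · rintro ⟨r, hr, h⟩ y hy
    dsimp only at hr h
    obtain rfl : g x = r := by exact_mod_cast (hval x hx).symm.trans hr
    exact_mod_cast hval y hy ▸ h y
  · refine fun h => ⟨g x, hval x hx, fun y => ?_⟩
    dsimp only
    by_cases hy : y ∈ A
    · rw [hval y hy]
      exact_mod_cast h y hy
    · simp [ind, hy]

theorem nonpos_of_forall_pos_mul_le {c b : ℝ} (h : ∀ t, 0 < t → c * t ≤ b) : c ≤ 0 := by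
  by_contra! hc
  obtain ⟨t, htb, ht⟩ :=
    (((tendsto_id.const_mul_atTop hc).eventually_gt_atTop b).and (eventually_gt_atTop 0)).exists
  exact (h t ht).not_gt htb

theorem le_of_forall_pos_add_mul_le {b c d : ℝ} (h : ∀ t, 0 < t → b + c * t ≤ d) : b ≤ d := by
  have hlim : Tendsto (fun t => b + c * t) (𝓝[>] 0) (𝓝 b) :=
    tendsto_nhdsWithin_of_tendsto_nhds <|
      (show Continuous fun t : ℝ => b + c * t by fun_prop).tendsto' 0 b (by simp)
  exact le_of_tendsto hlim (eventually_nhdsWithin_of_forall h)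

theorem nonneg_of_mem_C {y : ℝ × ℝ} (hy : y ∈ C) : 0 ≤ y.1 ∧ 0 ≤ y.2 := by
  rcases hy with ⟨hu, hv⟩ | ⟨hu, hv⟩
  · exact ⟨(mem_singleton_iff.1 hu).ge, by linarith [mem_Ici.1 hv]⟩
  · exact ⟨hu.le, hv.le⟩

theorem eps_subdiff_f₁_general (ε : ℝ) (a : ℝ) (ha : 3 ≤ a) :
    epsSubdiff2 f₁ ε (0, a) = Set.Iic (0 : ℝ) ×ˢ Set.Icc (1 - ε / a) 1 := by
  have ha0 : 0 < a := by linarith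
  ext ⟨p₁, p₂⟩
  unfold f₁
  rw [mem_epsSubdiff2_add_ind_iff (Or.inl ⟨rfl, ha⟩ : ((0 : ℝ), a) ∈ C)]
  simp only [mem_prod, mem_Iic, mem_Icc, sub_le_comm (b := ε / a), le_div_iff₀ ha0]
  constructor
  · intro h
    refine ⟨nonpos_of_forall_pos_mul_le (b := ε) fun t ht => ?_,
      le_of_forall_pos_add_mul_le (c := p₁ + p₂ - 1) fun t ht => ?_,
      sub_nonpos.1 (nonpos_of_forall_pos_mul_le (b := ε) fun t ht => ?_)⟩
    · linarith [h (t, a) (Or.inr ⟨ht, ha0⟩)]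
    · linarith [h (t, t) (Or.inr ⟨ht, ht⟩)]
    · linarith [h (0, a + t) (Or.inl ⟨rfl, show 3 ≤ a + t by linarith⟩)]
  · rintro ⟨hp₁, hp₂, hp₂'⟩ ⟨u, v⟩ hy
    obtain ⟨hu, hv⟩ := nonneg_of_mem_C hy
    linarith [mul_nonpos_of_nonpos_of_nonneg hp₁ hu, mul_nonneg (sub_nonneg.2 hp₂') hv]

/-- For every `ε > 0` and `a ≥ 3`, `∂_ε f₁(0,a) = (−∞,0] × [1 − ε/a, 1]`. -/
theorem eps_subdiff_f₁ (ε : ℝ) (hε : 0 < ε) (a : ℝ) (ha : 3 ≤ a) :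
    epsSubdiff2 f₁ ε (0, a) = Set.Iic (0 : ℝ) ×ˢ Set.Icc (1 - ε / a) 1 :=
  eps_subdiff_f₁_general ε a ha
end
end

section
/- Let C = ({0} × [3,∞)) ∪ int(ℝ²₊) ⊆ ℝ², f₁(u,v) = v + δ_C(u,v), f₂ = δ_{(−∞,0]} : ℝ → ℝ̄, and S = {(u,v,w) ∈ ℝ³ : u = w}. Then for every ε > 0 and every a ≥ 3, S^⊥ + ∂_ε f₁(0,a) × ∂_ε f₂(0) = ℝ × [1 − ε/a, 1] × ℝ; in particular this set is closed. -/
open Filter Topology Pointwise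

noncomputable section

/-- The function `f₂ = δ_{(−∞,0]} : ℝ → ℝ̄`. -/
def f₂ : ℝ → EReal := fun w => ind (Set.Iic (0 : ℝ)) w

/-- The subspace `S = {(u,v,w) ∈ ℝ³ : u = w}`, with `ℝ³` realized as `(ℝ × ℝ) × ℝ`. -/
def S : Set ((ℝ × ℝ) × ℝ) := {x | x.1.1 = x.2}

/-- The orthogonal space `S^⊥ = {x* ∈ ℝ³ : ⟨x*, x⟩ = 0 for all x ∈ S}`. -/
def Sperp : Set ((ℝ × ℝ) × ℝ) :=
  {p | ∀ x ∈ S, p.1.1 * x.1.1 + p.1.2 * x.1.2 + p.2 * x.2 = 0}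

/-!
`∂_ε f₂(0) = [0,∞)` and `∂_ε f₁(0,a) = (-∞,0] × [1 - ε/a, 1]`. For `f₁`, the ε-subgradient
inequality tested along the rays `(t, a)` and `(0, a + t)` of `C` gives `p ≤ 0` and `q ≤ 1`,
while letting `(δ, δ)` tend to the origin inside `int(ℝ²₊)` gives `(1 - q) a ≤ ε`.
Since `S^⊥ = {((t,0),-t)}`, adding it to `(-∞,0] × I × [0,∞)` fills out the first and last
coordinates, leaving the closed set `ℝ × I × ℝ`.
-/

open Set

lemma nonpos_of_forall_pos_mul_le_s12 {p K : ℝ} (h : ∀ t > 0, p * t ≤ K) : p ≤ 0 := by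
  by_contra! hp
  have := h ((|K| + 1) / p) (by positivity)
  rw [mul_div_cancel₀ _ hp.ne'] at this
  linarith [le_abs_self K]

lemma nonpos_of_forall_pos_add_mul_nonpos {c b : ℝ} (h : ∀ δ > 0, c + b * δ ≤ 0) : c ≤ 0 := by
  have hlim : Tendsto (fun δ => c + b * δ) (𝓝[>] 0) (𝓝 c) := by
    have hcont : Continuous fun δ : ℝ => c + b * δ := by fun_prop
    simpa using (hcont.tendsto 0).mono_left nhdsWithin_le_nhds
  exact le_of_tendsto hlim (eventually_nhdsWithin_of_forall h)

lemma coe_le_ind_iff {Y : Type*} {A : Set Y} {x : Y} {t : ℝ} :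
    (t : EReal) ≤ ind A x ↔ (x ∈ A → t ≤ 0) := by
  by_cases hx : x ∈ A <;> simp [ind, hx]

lemma coe_le_f₁_iff {y : ℝ × ℝ} {t : ℝ} : (t : EReal) ≤ f₁ y ↔ (y ∈ C → t ≤ y.2) := by
  by_cases hy : y ∈ C <;> simp [f₁, ind, hy]

lemma f₁_zero_of_three_le {a : ℝ} (ha : 3 ≤ a) : f₁ (0, a) = a := by
  have hC : ((0 : ℝ), a) ∈ C := Or.inl ⟨rfl, ha⟩
  simp [f₁, ind, hC]

lemma mem_epsSubdiff1_iff_of_eq {f : ℝ → EReal} {x r : ℝ} (hx : f x = r) {ε p : ℝ} :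
    p ∈ epsSubdiff1 f ε x ↔ ∀ y, ((r + p * (y - x) - ε : ℝ) : EReal) ≤ f y := by
  refine ⟨fun ⟨r', hr', h⟩ => ?_, fun h => ⟨r, hx, h⟩⟩
  rwa [EReal.coe_injective (hr'.symm.trans hx)] at h

lemma mem_epsSubdiff2_iff_of_eq {f : ℝ × ℝ → EReal} {x : ℝ × ℝ} {r : ℝ} (hx : f x = r)
    {ε : ℝ} {p : ℝ × ℝ} :
    p ∈ epsSubdiff2 f ε x ↔
      ∀ y, ((r + (p.1 * (y.1 - x.1) + p.2 * (y.2 - x.2)) - ε : ℝ) : EReal) ≤ f y := by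
  refine ⟨fun ⟨r', hr', h⟩ => ?_, fun h => ⟨r, hx, h⟩⟩
  rwa [EReal.coe_injective (hr'.symm.trans hx)] at h

lemma epsSubdiff1_f₂_zero {ε : ℝ} (hε : 0 ≤ ε) : epsSubdiff1 f₂ ε 0 = Ici 0 := by
  ext p
  rw [mem_epsSubdiff1_iff_of_eq (r := 0) (by simp [f₂, ind])]
  simp only [f₂, coe_le_ind_iff, mem_Iic, mem_Ici, zero_add, sub_zero, sub_nonpos]
  constructor
  · intro h
    have := nonpos_of_forall_pos_mul_le_s12 (p := -p) (K := ε) fun t ht => by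
      have := h (-t) (by linarith)
      linarith
    linarith
  · intro hp y hy
    nlinarith

lemma epsSubdiff2_f₁ (ε : ℝ) {a : ℝ} (ha : 3 ≤ a) :
    epsSubdiff2 f₁ ε (0, a) = Iic 0 ×ˢ Icc (1 - ε / a) 1 := by
  have ha0 : 0 < a := by linarith
  ext ⟨p, q⟩
  rw [mem_epsSubdiff2_iff_of_eq (f₁_zero_of_three_le ha)]
  have hlower : 1 - ε / a ≤ q ↔ (1 - q) * a ≤ ε := by rw [sub_le_comm, le_div_iff₀ ha0]
  simp only [coe_le_f₁_iff, mem_prod, mem_Iic, mem_Icc, sub_zero, hlower]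
  constructor
  · intro h
    have hp : p ≤ 0 := nonpos_of_forall_pos_mul_le_s12 (K := ε) fun t ht => by
      have := h (t, a) (Or.inr ⟨ht, ha0⟩)
      linarith
    have hq : q - 1 ≤ 0 := nonpos_of_forall_pos_mul_le_s12 (K := ε) fun t ht => by
      have := h (0, a + t) (Or.inl ⟨rfl, by simp only [mem_Ici]; linarith⟩)
      linarith
    have hqa : (1 - q) * a - ε ≤ 0 := nonpos_of_forall_pos_add_mul_nonpos
      (b := p + q - 1) fun δ hδ => by
        have := h (δ, δ) (Or.inr ⟨hδ, hδ⟩)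
        linarith
    exact ⟨hp, by linarith, by linarith⟩
  · rintro ⟨hp, hqa, hq⟩ y hy
    have hy' : p * y.1 ≤ 0 ∧ 0 ≤ y.2 := by
      rcases hy with ⟨hy1, hy2⟩ | ⟨hy1, hy2⟩
      · simp only [mem_singleton_iff, mem_Ici] at hy1 hy2
        simp only [hy1, mul_zero, le_refl, true_and]
        linarith
      · exact ⟨mul_nonpos_of_nonpos_of_nonneg hp hy1.le, hy2.le⟩
    nlinarith

lemma Sperp_eq : Sperp = {p : (ℝ × ℝ) × ℝ | p.1.2 = 0 ∧ p.2 = -p.1.1} := by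
  ext ⟨⟨t, u⟩, w⟩
  simp only [Sperp, S, mem_ofPred_eq]
  constructor
  · intro h
    have h1 := h ((1, 0), 1) rfl
    have h2 := h ((0, 1), 0) rfl
    simp only [mul_one, mul_zero, add_zero, zero_add] at h1 h2
    constructor <;> linarith
  · rintro ⟨rfl, rfl⟩ ⟨⟨x, y⟩, z⟩ (rfl : x = z)
    ring

lemma Sperp_add_prod (I : Set ℝ) : Sperp + (Iic 0 ×ˢ I) ×ˢ Ici 0 = (univ ×ˢ I) ×ˢ univ := by
  ext ⟨⟨z₁, z₂⟩, z₃⟩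
  simp only [Sperp_eq, Set.mem_add, mem_prod, mem_univ, true_and, and_true]
  constructor
  · rintro ⟨⟨⟨t, u⟩, w⟩, ⟨hu, -⟩, ⟨⟨q, r⟩, s⟩, ⟨⟨-, hr⟩, -⟩, hsum⟩
    simp only [Prod.mk_add_mk, Prod.mk.injEq] at hsum
    obtain ⟨⟨-, rfl⟩, -⟩ := hsum
    simpa [show u = 0 from hu] using hr
  · intro hz
    set t := max z₁ (-z₃)
    refine ⟨((t, 0), -t), ⟨rfl, rfl⟩, ((z₁ - t, z₂), z₃ + t), ⟨⟨?_, hz⟩, ?_⟩, ?_⟩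
    · simp [t]
    · simp only [mem_Ici]
      linarith [le_max_right z₁ (-z₃)]
    · simp only [Prod.mk_add_mk]
      ring_nf

/-- For all `ε > 0` and `a ≥ 3`, `S^⊥ + ∂_ε f₁(0,a) × ∂_ε f₂(0) = ℝ × [1 − ε/a, 1] × ℝ`;
in particular this set is closed. -/
theorem Sperp_add_eps_subdiff (ε : ℝ) (hε : 0 < ε) (a : ℝ) (ha : 3 ≤ a) :
    Sperp + (epsSubdiff2 f₁ ε (0, a)) ×ˢ (epsSubdiff1 f₂ ε 0) =
        ((Set.univ : Set ℝ) ×ˢ Set.Icc (1 - ε / a) 1) ×ˢ (Set.univ : Set ℝ) ∧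
      IsClosed (Sperp + (epsSubdiff2 f₁ ε (0, a)) ×ˢ (epsSubdiff1 f₂ ε 0)) := by
  have hsum : Sperp + (epsSubdiff2 f₁ ε (0, a)) ×ˢ (epsSubdiff1 f₂ ε 0) =
      (univ ×ˢ Icc (1 - ε / a) 1) ×ˢ univ := by
    rw [epsSubdiff2_f₁ ε ha, epsSubdiff1_f₂_zero hε.le, Sperp_add_prod]
  exact ⟨hsum, hsum ▸ (isClosed_univ.prod isClosed_Icc).prod isClosed_univ⟩
end
end

section
/- Let C = ({0} × [3,∞)) ∪ int(ℝ²₊) ⊆ ℝ², f₁(u,v) = v + δ_C(u,v), f₂ = δ_{(−∞,0]} : ℝ → ℝ̄, and S = {(u,v,w) ∈ ℝ³ : u = w}. Then inf{ f₁(u,v) + f₂(w) : (u,v,w) ∈ S } = 3 while sup{ −f₁*(u*,v*) − f₂*(w*) : (u*,v*,w*) ∈ S^⊥ } = 0; in particular there is a nonzero duality gap between the extended monotropic primal problem and its dual. -/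
open Filter Topology Pointwise

noncomputable section

/-- The conjugate of a function `f : ℝ² → ℝ̄`, with the dual of `ℝ²` identified
with `ℝ²`. -/
def conj2 (f : ℝ × ℝ → EReal) (p : ℝ × ℝ) : EReal :=
  ⨆ x : ℝ × ℝ, ((p.1 * x.1 + p.2 * x.2 : ℝ) : EReal) - f x

/-- The conjugate of a function `f : ℝ → ℝ̄`. -/
def conj1 (f : ℝ → EReal) (p : ℝ) : EReal :=
  ⨆ x : ℝ, ((p * x : ℝ) : EReal) - f x

/-
Primal: on `S` we have `u = w`, and `f₂(w) < ∞` forces `w ≤ 0`, while the only points of `C` with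
`u ≤ 0` lie on the ray `{0} × [3,∞)`; so every feasible point costs at least `3`, attained at
`(0,3,0)`.
Dual: `S^⊥ = {(a,0,-a)}`. Along the diagonal `(t,t) ∈ int(ℝ²₊)` one gets `f₁*(a,0) ≥ (a-1)t`
for every `t > 0`, hence `f₁*(a,0) ≥ 0` by letting `t → 0⁺`, and `f₂*(b) ≥ -f₂(0) = 0`; so the dual
value is at most `0`, attained at `p = 0` because `f₁, f₂ ≥ 0`.
-/

lemma ind_of_mem {Y : Type*} {A : Set Y} {x : Y} (h : x ∈ A) : ind A x = 0 := if_pos h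

lemma ind_of_notMem {Y : Type*} {A : Set Y} {x : Y} (h : x ∉ A) : ind A x = ⊤ := if_neg h

lemma snd_pos_of_mem_C {p : ℝ × ℝ} (hp : p ∈ C) : 0 < p.2 := by
  rcases hp with ⟨-, h⟩ | ⟨-, h⟩
  · exact lt_of_lt_of_le three_pos h
  · exact h

lemma three_le_snd_of_mem_C {p : ℝ × ℝ} (hp : p ∈ C) (h₁ : p.1 ≤ 0) : 3 ≤ p.2 := by
  rcases hp with ⟨-, h⟩ | ⟨h, -⟩
  · exact h
  · linarith

lemma f₁_of_mem {p : ℝ × ℝ} (hp : p ∈ C) : f₁ p = p.2 := by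
  rw [f₁, ind_of_mem hp, add_zero]

lemma f₁_of_notMem {p : ℝ × ℝ} (hp : p ∉ C) : f₁ p = ⊤ := by
  rw [f₁, ind_of_notMem hp, EReal.add_top_of_ne_bot (EReal.coe_ne_bot _)]

lemma f₂_of_nonpos {w : ℝ} (hw : w ≤ 0) : f₂ w = 0 := ind_of_mem hw

lemma f₂_of_pos {w : ℝ} (hw : 0 < w) : f₂ w = ⊤ := ind_of_notMem (not_le.2 hw)

lemma f₁_nonneg (p : ℝ × ℝ) : 0 ≤ f₁ p := by
  by_cases hp : p ∈ C
  · rw [f₁_of_mem hp]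
    exact_mod_cast (snd_pos_of_mem_C hp).le
  · simp [f₁_of_notMem hp]

lemma f₂_nonneg (w : ℝ) : 0 ≤ f₂ w := by
  rcases le_or_gt w 0 with hw | hw
  · rw [f₂_of_nonpos hw]
  · simp [f₂_of_pos hw]

lemma three_le_f₁_of_fst_nonpos {p : ℝ × ℝ} (h₁ : p.1 ≤ 0) : 3 ≤ f₁ p := by
  by_cases hp : p ∈ C
  · rw [f₁_of_mem hp]
    exact EReal.coe_le_coe_iff.2 (three_le_snd_of_mem_C hp h₁)
  · simp [f₁_of_notMem hp]

lemma three_le_f₁_add_f₂ {x : (ℝ × ℝ) × ℝ} (hx : x ∈ S) : 3 ≤ f₁ x.1 + f₂ x.2 := by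
  rcases le_or_gt x.2 0 with hw | hw
  · rw [f₂_of_nonpos hw, add_zero]
    exact three_le_f₁_of_fst_nonpos (hx.trans_le hw)
  · have hf₁ : f₁ x.1 ≠ ⊥ := (EReal.bot_lt_zero.trans_le (f₁_nonneg _)).ne'
    rw [f₂_of_pos hw, EReal.add_top_of_ne_bot hf₁]
    exact le_top

lemma primal_value : (⨅ x ∈ S, f₁ x.1 + f₂ x.2) = 3 := by
  refine le_antisymm ?_ (le_iInf₂ fun x hx => three_le_f₁_add_f₂ hx)
  have h₀ : (((0 : ℝ), (3 : ℝ)), (0 : ℝ)) ∈ S := rfl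
  refine (iInf₂_le _ h₀).trans_eq ?_
  show f₁ (0, 3) + f₂ 0 = 3
  have h₁ : ((0 : ℝ), (3 : ℝ)) ∈ C := Or.inl ⟨rfl, le_refl (3 : ℝ)⟩
  rw [f₁_of_mem h₁, f₂_of_nonpos le_rfl, add_zero]
  rfl

lemma snd_fst_eq_zero_of_mem_Sperp {p : (ℝ × ℝ) × ℝ} (hp : p ∈ Sperp) : p.1.2 = 0 := by
  simpa using hp ((0, 1), 0) rfl

lemma conj2_zero_le_zero {f : ℝ × ℝ → EReal} (hf : ∀ x, 0 ≤ f x) : conj2 f 0 ≤ 0 :=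
  iSup_le fun x => by simpa using hf x

lemma conj1_zero_le_zero {f : ℝ → EReal} (hf : ∀ x, 0 ≤ f x) : conj1 f 0 ≤ 0 :=
  iSup_le fun x => by simpa using hf x

lemma conj1_nonneg_of_apply_zero {f : ℝ → EReal} (hf : f 0 = 0) (b : ℝ) : 0 ≤ conj1 f b :=
  le_iSup_of_le 0 (by simp [hf])

lemma conj2_f₁_nonneg (a : ℝ) : 0 ≤ conj2 f₁ (a, 0) := by
  have hdiag : ∀ t > 0, (((a - 1) * t : ℝ) : EReal) ≤ conj2 f₁ (a, 0) := fun t ht =>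
    le_iSup_of_le (t, t) <| by
      rw [f₁_of_mem (Or.inr ⟨ht, ht⟩), ← EReal.coe_sub]
      exact EReal.coe_le_coe_iff.2 (le_of_eq (by ring))
  have hlim : Tendsto (fun t : ℝ => (((a - 1) * t : ℝ) : EReal)) (𝓝[>] 0) (𝓝 0) := by
    rw [← EReal.coe_zero, EReal.tendsto_coe]
    have := (tendsto_id (x := 𝓝 (0 : ℝ))).const_mul (a - 1)
    rw [mul_zero] at this
    exact tendsto_nhdsWithin_of_tendsto_nhds this
  exact le_of_tendsto hlim (eventually_nhdsWithin_of_forall hdiag)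

lemma dual_value : (⨆ p ∈ Sperp, -conj2 f₁ p.1 - conj1 f₂ p.2) = 0 := by
  refine le_antisymm (iSup₂_le fun p hp => ?_) ?_
  · have h₁ : 0 ≤ conj2 f₁ p.1 := by
      rw [← Prod.mk.eta (p := p.1), snd_fst_eq_zero_of_mem_Sperp hp]
      exact conj2_f₁_nonneg _
    have h₂ : 0 ≤ conj1 f₂ p.2 := conj1_nonneg_of_apply_zero (f₂_of_nonpos le_rfl) _
    rw [sub_eq_add_neg]
    exact add_nonpos ((EReal.neg_le_neg_iff.2 h₁).trans_eq neg_zero)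
      ((EReal.neg_le_neg_iff.2 h₂).trans_eq neg_zero)
  · have h₀ : ((0 : ℝ × ℝ), (0 : ℝ)) ∈ Sperp := fun x _ => by simp
    refine le_iSup₂_of_le _ h₀ ?_
    have h₁ := le_antisymm (conj2_zero_le_zero f₁_nonneg) (conj2_f₁_nonneg 0)
    have h₂ := le_antisymm (conj1_zero_le_zero f₂_nonneg)
      (conj1_nonneg_of_apply_zero (f₂_of_nonpos le_rfl) 0)
    simp [h₁, h₂]

/-- The primal optimal value is `3`, the dual optimal value is `0`; in particular there
is a nonzero duality gap. -/
theorem nonzero_duality_gap :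
    (⨅ x ∈ S, f₁ x.1 + f₂ x.2) = (3 : EReal) ∧
      (⨆ p ∈ Sperp, -conj2 f₁ p.1 - conj1 f₂ p.2) = (0 : EReal) ∧
      (⨆ p ∈ Sperp, -conj2 f₁ p.1 - conj1 f₂ p.2) < ⨅ x ∈ S, f₁ x.1 + f₂ x.2 := by
  refine ⟨primal_value, dual_value, ?_⟩
  rw [primal_value, dual_value]
  norm_num
end
end
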